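/- Let d ≥ 1 and let h : ℝ × ℝ^d → ℝ be continuously differentiable and Lipschitz with Lipschitz constant Lip(h) ≤ 1, and define f_h(x,y) = e^{x²/2} ∫_{−∞}^{x} (h(t,y) − ∫_ℝ h(z,y) γ(dz)) e^{−t²/2} dt. Then for every j ∈ {1,…,d} and every (x,y) ∈ ℝ × ℝ^d the partial derivative ∂_{y_j} f_h(x,y) exists and equals e^{x²/2} ∫_{−∞}^{x} (∂_{y_j} h(t,y) − ∫_ℝ ∂_{y_j} h(z,y) γ(dz)) e^{−t²/2} dt; moreover |∂_{y_j} f_h(x,y)| ≤ √(2π), the mixed partial derivative ∂_x ∂_{y_j} f_h(x,y) exists, and |∂_x ∂_{y_j} f_h(x,y)| ≤ 4. -/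

import Mathlib

open MeasureTheory ProbabilityTheory

open Real Set
open scoped ENNReal NNReal

noncomputable def phi (t : ℝ) : ℝ := Real.exp (-t^2/2)

lemma phi_def (t : ℝ) : Real.exp (-t^2/2) = phi t := rfl

lemma phi_eq : phi = fun t : ℝ => Real.exp (-(1/2 : ℝ) * t^2) := by
  funext t; unfold phi; congr 1; ring

lemma phi_pos (t : ℝ) : 0 < phi t := Real.exp_pos _

lemma phi_cont : Continuous phi := by
  unfold phi; continuity

lemma phi_integrable : Integrable phi := by
  rw [phi_eq]; exact integrable_exp_neg_mul_sq (by norm_num)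

lemma abs_mul_phi_integrable : Integrable (fun t : ℝ => |t| * phi t) := by
  have h := (integrable_mul_exp_neg_mul_sq (b := 1/2) (by norm_num)).abs
  refine h.congr (Filter.Eventually.of_forall fun t => ?_)
  show |t * Real.exp (-(1/2 : ℝ) * t^2)| = |t| * phi t
  rw [abs_mul, phi_eq]
  congr 1
  exact abs_of_pos (Real.exp_pos _)

lemma id_mul_phi_integrable : Integrable (fun t : ℝ => t * phi t) := by
  have h := (integrable_mul_exp_neg_mul_sq (b := 1/2) (by norm_num))
  have heq : (fun t : ℝ => t * Real.exp (-(1/2:ℝ) * t^2)) = fun t => t * phi t := by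
    funext t; unfold phi; congr 2; ring
  rwa [heq] at h

lemma sqrt_two_pi_eq : Real.sqrt (2 * π) = 2 * Real.sqrt (π/2) := by
  rw [show (2 : ℝ) * π = 2^2 * (π/2) by ring, Real.sqrt_mul (by positivity),
    Real.sqrt_sq (by norm_num)]

lemma integral_phi : ∫ t : ℝ, phi t = Real.sqrt (2 * π) := by
  rw [phi_eq]
  have := integral_gaussian (1/2)
  rw [show ∫ t : ℝ, Real.exp (-(1/2 : ℝ) * t^2) = √(π / (1/2)) from this,
    show π / (1/2 : ℝ) = 2 * π by ring]

lemma integral_phi_Ioi_zero : ∫ t in Ioi (0:ℝ), phi t = Real.sqrt (π/2) := by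
  rw [phi_eq]
  have := integral_gaussian_Ioi (1/2)
  rw [show ∫ t in Ioi (0:ℝ), Real.exp (-(1/2 : ℝ) * t^2) = √(π / (1/2)) / 2 from this]
  rw [show π / (1/2 : ℝ) = 2^2 * (π/2) by ring, Real.sqrt_mul (by positivity),
    Real.sqrt_sq (by norm_num)]
  ring

lemma translate_Ici (f : ℝ → ℝ) (x : ℝ) :
    ∫ t in Ici x, f (t - x) = ∫ s in Ici (0:ℝ), f s := by
  have h := (measurePreserving_add_right volume x).setIntegral_preimage_emb
    (MeasurableEquiv.addRight x).measurableEmbedding (fun t => f (t - x)) (Ici x)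
  have hpre : (fun s : ℝ => s + x) ⁻¹' Ici x = Ici 0 := by
    ext s; simp [le_add_iff_nonneg_left]
  rw [hpre] at h
  rw [← h]
  simp

lemma mills1 (x : ℝ) (hx : 0 ≤ x) :
    ∫ t in Ici x, phi t ≤ Real.exp (-x^2/2) * Real.sqrt (π/2) := by
  have key : ∀ t ∈ Ici x, phi t ≤ Real.exp (-x^2/2) * phi (t - x) := by
    intro t ht
    unfold phi
    rw [← Real.exp_add]
    apply Real.exp_le_exp.2
    have : x ≤ t := ht
    nlinarith [sq_nonneg (t - x)]
  calc ∫ t in Ici x, phi t ≤ ∫ t in Ici x, Real.exp (-x^2/2) * phi (t - x) := by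
        refine setIntegral_mono_on (phi_integrable.integrableOn) ?_ measurableSet_Ici key
        exact ((phi_integrable.comp_sub_right x).const_mul _).integrableOn
    _ = Real.exp (-x^2/2) * ∫ t in Ici x, phi (t - x) := by rw [integral_const_mul _ _]
    _ = Real.exp (-x^2/2) * ∫ t in Ici (0:ℝ), phi t := by rw [translate_Ici]
    _ ≤ Real.exp (-x^2/2) * Real.sqrt (π/2) := by
        rw [integral_Ici_eq_integral_Ioi, integral_phi_Ioi_zero]

lemma integral_id_mul_phi_Ici (x : ℝ) : ∫ t in Ioi x, t * phi t = Real.exp (-x^2/2) := by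
  have hderiv : ∀ t ∈ Ioi x, HasDerivAt (fun u : ℝ => -phi u) (t * phi t) t := by
    intro t _
    unfold phi
    have h1 : HasDerivAt (fun u : ℝ => -u^2/2) (-t) t := by
      have h0 := ((hasDerivAt_pow 2 t).div_const 2).neg
      norm_num at h0
      have h2 : (fun u : ℝ => -u^2/2) = -fun x : ℝ => x^2/2 := by
        funext u; simp only [Pi.neg_apply]; ring
      rw [h2]; exact h0
    have := h1.exp
    have h3 := this.neg
    have h4 : (fun u : ℝ => -Real.exp (-u^2/2)) = -fun x : ℝ => Real.exp (-x^2/2) := by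
      funext u; simp only [Pi.neg_apply]
    rw [h4]; exact h3.congr_deriv (by ring)
  have hint : IntegrableOn (fun t => t * phi t) (Ioi x) := id_mul_phi_integrable.integrableOn
  have htend : Filter.Tendsto (fun u : ℝ => -phi u) Filter.atTop (nhds 0) := by
    rw [show (0:ℝ) = -0 by ring]
    apply Filter.Tendsto.neg
    unfold phi
    apply Real.tendsto_exp_atBot.comp
    apply Filter.Tendsto.atBot_div_const (by norm_num)
    rw [Filter.tendsto_neg_atBot_iff]
    exact Filter.tendsto_pow_atTop (by norm_num : (2:ℕ) ≠ 0)
  have := integral_Ioi_of_hasDerivAt_of_tendsto (f := fun u => -phi u)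
    (f' := fun t => t * phi t) (a := x) ?_ hderiv hint htend
  · rw [this]; unfold phi; ring
  · exact (phi_cont.neg).continuousWithinAt

lemma mills2 (x : ℝ) (hx : 0 ≤ x) :
    x * ∫ t in Ici x, phi t ≤ Real.exp (-x^2/2) := by
  rw [integral_Ici_eq_integral_Ioi, ← integral_const_mul _ _]
  rw [← integral_id_mul_phi_Ici x]
  refine setIntegral_mono_on ?_ ?_ measurableSet_Ioi ?_
  · exact ((phi_integrable.const_mul x)).integrableOn
  · exact id_mul_phi_integrable.integrableOn
  · intro t ht
    have : x ≤ t := le_of_lt ht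
    nlinarith [phi_pos t]

lemma gaussianPDFReal_eq (z : ℝ) :
    gaussianPDFReal 0 1 z = (Real.sqrt (2*π))⁻¹ * phi z := by
  unfold gaussianPDFReal phi
  norm_num

lemma gaussianReal_eq_withDensity :
    gaussianReal 0 1 = volume.withDensity
      (fun z => ((gaussianPDFReal 0 1 z).toNNReal : ℝ≥0∞)) := by
  rw [gaussianReal_of_var_ne_zero _ one_ne_zero]
  rfl

lemma integral_gaussianReal_eq (f : ℝ → ℝ) :
    ∫ z, f z ∂(gaussianReal 0 1) = (Real.sqrt (2*π))⁻¹ * ∫ z, f z * phi z := by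
  rw [gaussianReal_eq_withDensity,
    integral_withDensity_eq_integral_smul ((measurable_gaussianPDFReal 0 1).real_toNNReal) f]
  rw [← integral_const_mul]
  congr 1
  funext z
  rw [NNReal.smul_def, smul_eq_mul, Real.coe_toNNReal _ (gaussianPDFReal_nonneg 0 1 z),
    gaussianPDFReal_eq]
  ring

lemma integrable_gaussianReal_of (f : ℝ → ℝ)
    (hf : Integrable (fun z => f z * phi z)) : Integrable f (gaussianReal 0 1) := by
  rw [gaussianReal_eq_withDensity]
  refine (integrable_withDensity_iff_integrable_smul
    ((measurable_gaussianPDFReal 0 1).real_toNNReal)).2 ?_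
  have : (fun z => (gaussianPDFReal 0 1 z).toNNReal • f z)
      = fun z => (Real.sqrt (2*π))⁻¹ * (f z * phi z) := by
    funext z
    rw [NNReal.smul_def, smul_eq_mul, Real.coe_toNNReal _ (gaussianPDFReal_nonneg 0 1 z),
      gaussianPDFReal_eq]
    ring
  rw [this]
  exact hf.const_mul _

lemma reflect_Iio (x : ℝ) : ∫ t in Iio x, phi t = ∫ t in Ici (-x), phi t := by
  rw [← integral_Iic_eq_integral_Iio]
  have heven : ∀ t : ℝ, phi (-t) = phi t := by
    intro t; unfold phi; rw [neg_sq]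
  rw [show (∫ t in Iic x, phi t) = ∫ t in Iic x, phi (-t) by
    exact setIntegral_congr_fun measurableSet_Iic fun t _ => (heven t).symm]
  rw [integral_comp_neg_Iic x phi, integral_Ici_eq_integral_Ioi]

lemma steinAux (H : ℝ × ℝ → ℝ) (hC1 : ContDiff ℝ 1 H)
    (hLipt : ∀ t t' s, |H (t,s) - H (t',s)| ≤ |t - t'|)
    (hLips : ∀ t s s', |H (t,s) - H (t,s')| ≤ |s - s'|) :
    ∀ x : ℝ,
    (HasDerivAt (fun s => Real.exp (x^2/2) *
        ∫ t in Set.Iio x, (H (t,s) - ∫ z, H (z,s) ∂(gaussianReal 0 1)) * Real.exp (-t^2/2))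
      (Real.exp (x^2/2) * ∫ t in Set.Iio x,
        ((deriv (fun s => H (t,s)) 0) - ∫ z, deriv (fun s => H (z,s)) 0 ∂(gaussianReal 0 1))
          * Real.exp (-t^2/2)) 0)
    ∧ |Real.exp (x^2/2) * ∫ t in Set.Iio x,
        ((deriv (fun s => H (t,s)) 0) - ∫ z, deriv (fun s => H (z,s)) 0 ∂(gaussianReal 0 1))
          * Real.exp (-t^2/2)| ≤ Real.sqrt (2*π)
    ∧ ∃ q, HasDerivAt (fun x' => Real.exp (x'^2/2) * ∫ t in Set.Iio x',
        ((deriv (fun s => H (t,s)) 0) - ∫ z, deriv (fun s => H (z,s)) 0 ∂(gaussianReal 0 1))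
          * Real.exp (-t^2/2)) q x ∧ |q| ≤ 4 := by
  intro x
  -- the directional derivative
  set D : ℝ → ℝ := fun t => fderiv ℝ H (t, 0) (0, 1) with hD_def
  have key : ∀ t s₀ : ℝ, HasDerivAt (fun s => H (t, s)) (fderiv ℝ H (t, s₀) (0, 1)) s₀ := by
    intro t s₀
    have hdiff : DifferentiableAt ℝ H (t, s₀) := (hC1.differentiable one_ne_zero).differentiableAt
    have hcurve : HasDerivAt (fun s : ℝ => ((t, s) : ℝ × ℝ)) ((0 : ℝ), (1 : ℝ)) s₀ :=
      HasDerivAt.prodMk (hasDerivAt_const s₀ t) (hasDerivAt_id s₀)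
    exact hdiff.hasFDerivAt.comp_hasDerivAt s₀ hcurve
  have hg : ∀ t : ℝ, deriv (fun s => H (t,s)) 0 = D t := fun t => (key t 0).deriv
  have hlipline : ∀ t : ℝ, LipschitzWith 1 (fun s => H (t, s)) := by
    intro t
    apply LipschitzWith.of_dist_le_mul
    intro s s'
    rw [Real.dist_eq, Real.dist_eq]
    simpa using hLips t s s'
  have hD1 : ∀ t, |D t| ≤ 1 := by
    intro t
    have := (key t 0).le_of_lipschitz (hlipline t)
    simpa [Real.norm_eq_abs] using this
  have hDcont : Continuous D := by
    have h1 : Continuous fun t : ℝ => fderiv ℝ H (t, 0) :=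
      (hC1.continuous_fderiv one_ne_zero).comp (continuous_id.prodMk continuous_const)
    exact h1.clm_apply continuous_const
  have hHcont : Continuous H := hC1.continuous
  have hHsec : ∀ s : ℝ, Continuous fun t => H (t, s) := fun s =>
    hHcont.comp (continuous_id.prodMk continuous_const)
  have hHsec' : ∀ t : ℝ, Continuous fun s => H (t, s) := fun t =>
    hHcont.comp (continuous_const.prodMk continuous_id)
  have hHb : ∀ s t : ℝ, |H (t,s)| ≤ |H (0,s)| + |t| := by
    intro s t
    have h1 := hLipt t 0 s
    have h2 := abs_sub_abs_le_abs_sub (H (t,s)) (H (0,s))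
    simp only [sub_zero] at h1
    linarith
  have hbint : ∀ s : ℝ, Integrable (fun t => (|H (0,s)| + |t|) * phi t) := by
    intro s
    have heq : (fun t : ℝ => (|H (0,s)| + |t|) * phi t)
        = fun t => |H (0,s)| * phi t + |t| * phi t := by funext t; ring
    rw [heq]
    exact (phi_integrable.const_mul _).add abs_mul_phi_integrable
  have hHφint : ∀ s : ℝ, Integrable (fun t => H (t,s) * phi t) := by
    intro s
    refine (hbint s).mono' (((hHsec s).mul phi_cont).aestronglyMeasurable) ?_
    refine Filter.Eventually.of_forall fun t => ?_
    rw [Real.norm_eq_abs, abs_mul, abs_of_pos (phi_pos t)]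
    exact mul_le_mul_of_nonneg_right (hHb s t) (phi_pos t).le
  have hγint : ∀ s : ℝ, Integrable (fun z => H (z,s)) (gaussianReal 0 1) := fun s =>
    integrable_gaussianReal_of _ (hHφint s)
  -- derivative of the Gaussian average
  have hmstep := hasDerivAt_integral_of_dominated_loc_of_lip
    (μ := gaussianReal 0 1) (F := fun s z => H (z, s)) (F' := D) (x₀ := (0:ℝ))
    (bound := fun _ => (1:ℝ)) (s := Metric.ball 0 1) (Metric.ball_mem_nhds 0 one_pos)
    (Filter.Eventually.of_forall fun s => (hHsec s).aestronglyMeasurable)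
    (hγint 0) hDcont.aestronglyMeasurable
    (Filter.Eventually.of_forall fun z => by
      have h1 : (Real.nnabs (1:ℝ)) = 1 := by simp
      rw [h1]
      exact (hlipline z).lipschitzOnWith)
    (integrable_const 1)
    (Filter.Eventually.of_forall fun z => key z 0)
  obtain ⟨hDγint, hmderiv⟩ := hmstep
  set gbar : ℝ := ∫ z, D z ∂(gaussianReal 0 1) with hgbar_def
  have hgbar1 : |gbar| ≤ 1 := by
    rw [hgbar_def]
    calc |∫ z, D z ∂(gaussianReal 0 1)| ≤ ∫ z, |D z| ∂(gaussianReal 0 1) := by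
          simpa [Real.norm_eq_abs] using
            norm_integral_le_integral_norm (μ := gaussianReal 0 1) D
      _ ≤ ∫ _z, (1:ℝ) ∂(gaussianReal 0 1) :=
          integral_mono hDγint.abs (integrable_const 1) (fun z => hD1 z)
      _ = 1 := by simp
  have hDφint : Integrable (fun t => D t * phi t) := by
    refine (phi_integrable).mono' ((hDcont.mul phi_cont).aestronglyMeasurable) ?_
    refine Filter.Eventually.of_forall fun t => ?_
    rw [Real.norm_eq_abs, abs_mul, abs_of_pos (phi_pos t)]
    nlinarith [hD1 t, phi_pos t]
  have hρint : Integrable (fun t => (D t - gbar) * phi t) := by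
    have heq : (fun t => (D t - gbar) * phi t)
        = fun t => D t * phi t - gbar * phi t := by funext t; ring
    rw [heq]
    exact hDφint.sub (phi_integrable.const_mul gbar)
  have hρcont : Continuous fun t => (D t - gbar) * phi t :=
    (hDcont.sub continuous_const).mul phi_cont
  have hDφtot : ∫ t, D t * phi t = Real.sqrt (2*π) * gbar := by
    have h9 := integral_gaussianReal_eq D
    rw [hgbar_def, h9]
    have hne : Real.sqrt (2*π) ≠ 0 := by positivity
    field_simp
  have hρtot : ∫ t, (D t - gbar) * phi t = 0 := by
    have heq : (fun t => (D t - gbar) * phi t)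
        = fun t => D t * phi t - gbar * phi t := by funext t; ring
    rw [heq, integral_sub hDφint (phi_integrable.const_mul gbar), integral_const_mul,
      integral_phi, hDφtot]
    ring
  have hρbound : ∀ t, |(D t - gbar) * phi t| ≤ 2 * phi t := by
    intro t
    rw [abs_mul, abs_of_pos (phi_pos t)]
    have : |D t - gbar| ≤ 2 := by
      calc |D t - gbar| ≤ |D t| + |gbar| := abs_sub _ _
        _ ≤ 2 := by linarith [hD1 t, hgbar1]
    nlinarith [phi_pos t]
  have hGb1 : ∀ X : ℝ, |∫ t in Iio X, (D t - gbar) * phi t| ≤ 2 * ∫ t in Iio X, phi t := by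
    intro X
    calc |∫ t in Iio X, (D t - gbar) * phi t| ≤ ∫ t in Iio X, |(D t - gbar) * phi t| := by
          have hnn := norm_integral_le_integral_norm (μ := volume.restrict (Iio X))
            (fun t => (D t - gbar) * phi t)
          simp only [Real.norm_eq_abs] at hnn
          exact hnn
      _ ≤ ∫ t in Iio X, 2 * phi t :=
          integral_mono (hρint.abs.integrableOn) ((phi_integrable.const_mul 2).integrableOn)
            (fun t => hρbound t)
      _ = 2 * ∫ t in Iio X, phi t := integral_const_mul _ _
  have hGb2 : ∀ X : ℝ, |∫ t in Iio X, (D t - gbar) * phi t| ≤ 2 * ∫ t in Ici X, phi t := by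
    intro X
    have hsplit := integral_add_compl (measurableSet_Iio (a := X)) hρint
    rw [compl_Iio, hρtot] at hsplit
    have hIio : (∫ t in Iio X, (D t - gbar) * phi t) = -∫ t in Ici X, (D t - gbar) * phi t := by
      linarith
    rw [hIio, abs_neg]
    calc |∫ t in Ici X, (D t - gbar) * phi t| ≤ ∫ t in Ici X, |(D t - gbar) * phi t| := by
          have hnn := norm_integral_le_integral_norm (μ := volume.restrict (Ici X))
            (fun t => (D t - gbar) * phi t)
          simp only [Real.norm_eq_abs] at hnn
          exact hnn
      _ ≤ ∫ t in Ici X, 2 * phi t :=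
          integral_mono (hρint.abs.integrableOn) ((phi_integrable.const_mul 2).integrableOn)
            (fun t => hρbound t)
      _ = 2 * ∫ t in Ici X, phi t := integral_const_mul _ _
  -- exp(x²/2)·exp(-x²/2) = 1
  have hexp1 : ∀ X : ℝ, Real.exp (X^2/2) * Real.exp (-X^2/2) = 1 := by
    intro X; rw [← Real.exp_add, show X^2/2 + -X^2/2 = 0 by ring, Real.exp_zero]
  have hInonneg : ∀ (S : Set ℝ), 0 ≤ ∫ t in S, phi t := fun S =>
    setIntegral_nonneg_of_ae_restrict (Filter.Eventually.of_forall fun t => (phi_pos t).le)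
  -- combined Mills-type bounds
  have hmin : ∀ X : ℝ,
      Real.exp (X^2/2) * |∫ t in Iio X, (D t - gbar) * phi t| ≤ 2 * Real.sqrt (π/2) := by
    intro X
    rcases le_total X 0 with hX | hX
    · have h1 : |∫ t in Iio X, (D t - gbar) * phi t| ≤ 2 * ∫ t in Ici (-X), phi t := by
        rw [← reflect_Iio]; exact hGb1 X
      have h2 : ∫ t in Ici (-X), phi t ≤ Real.exp (-X^2/2) * Real.sqrt (π/2) := by
        have := mills1 (-X) (by linarith)
        simpa [neg_sq] using this
      calc Real.exp (X^2/2) * |∫ t in Iio X, (D t - gbar) * phi t|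
          ≤ Real.exp (X^2/2) * (2 * (Real.exp (-X^2/2) * Real.sqrt (π/2))) := by
            apply mul_le_mul_of_nonneg_left _ (Real.exp_pos _).le
            linarith
        _ = 2 * Real.sqrt (π/2) * (Real.exp (X^2/2) * Real.exp (-X^2/2)) := by ring
        _ = 2 * Real.sqrt (π/2) := by rw [hexp1, mul_one]
    · have h1 : |∫ t in Iio X, (D t - gbar) * phi t| ≤ 2 * ∫ t in Ici X, phi t := hGb2 X
      have h2 := mills1 X hX
      calc Real.exp (X^2/2) * |∫ t in Iio X, (D t - gbar) * phi t|
          ≤ Real.exp (X^2/2) * (2 * (Real.exp (-X^2/2) * Real.sqrt (π/2))) := by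
            apply mul_le_mul_of_nonneg_left _ (Real.exp_pos _).le
            linarith
        _ = 2 * Real.sqrt (π/2) * (Real.exp (X^2/2) * Real.exp (-X^2/2)) := by ring
        _ = 2 * Real.sqrt (π/2) := by rw [hexp1, mul_one]
  have hxmin : ∀ X : ℝ,
      |X| * (Real.exp (X^2/2) * |∫ t in Iio X, (D t - gbar) * phi t|) ≤ 2 := by
    intro X
    rcases le_total X 0 with hX | hX
    · have habs : |X| = -X := abs_of_nonpos hX
      have h1 : |∫ t in Iio X, (D t - gbar) * phi t| ≤ 2 * ∫ t in Ici (-X), phi t := by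
        rw [← reflect_Iio]; exact hGb1 X
      have h2 : (-X) * ∫ t in Ici (-X), phi t ≤ Real.exp (-X^2/2) := by
        have := mills2 (-X) (by linarith)
        simpa [neg_sq] using this
      have hE := (Real.exp_pos (X^2/2)).le
      have ha : (0:ℝ) ≤ -X := by linarith
      calc |X| * (Real.exp (X^2/2) * |∫ t in Iio X, (D t - gbar) * phi t|)
          = Real.exp (X^2/2) * ((-X) * |∫ t in Iio X, (D t - gbar) * phi t|) := by
            rw [habs]; ring
        _ ≤ Real.exp (X^2/2) * ((-X) * (2 * ∫ t in Ici (-X), phi t)) :=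
            mul_le_mul_of_nonneg_left (mul_le_mul_of_nonneg_left h1 ha) hE
        _ = 2 * Real.exp (X^2/2) * ((-X) * ∫ t in Ici (-X), phi t) := by ring
        _ ≤ 2 * Real.exp (X^2/2) * Real.exp (-X^2/2) :=
            mul_le_mul_of_nonneg_left h2 (by positivity)
        _ = 2 * (Real.exp (X^2/2) * Real.exp (-X^2/2)) := by ring
        _ = 2 := by rw [hexp1 X, mul_one]
    · have habs : |X| = X := abs_of_nonneg hX
      have h1 : |∫ t in Iio X, (D t - gbar) * phi t| ≤ 2 * ∫ t in Ici X, phi t := hGb2 X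
      have h2 := mills2 X hX
      have hE := (Real.exp_pos (X^2/2)).le
      calc |X| * (Real.exp (X^2/2) * |∫ t in Iio X, (D t - gbar) * phi t|)
          = Real.exp (X^2/2) * (X * |∫ t in Iio X, (D t - gbar) * phi t|) := by
            rw [habs]; ring
        _ ≤ Real.exp (X^2/2) * (X * (2 * ∫ t in Ici X, phi t)) :=
            mul_le_mul_of_nonneg_left (mul_le_mul_of_nonneg_left h1 hX) hE
        _ = 2 * Real.exp (X^2/2) * (X * ∫ t in Ici X, phi t) := by ring
        _ ≤ 2 * Real.exp (X^2/2) * Real.exp (-X^2/2) :=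
            mul_le_mul_of_nonneg_left h2 (by positivity)
        _ = 2 * (Real.exp (X^2/2) * Real.exp (-X^2/2)) := by ring
        _ = 2 := by rw [hexp1 X, mul_one]
  -- the key parametric derivative, for every cut point X
  have key1 : ∀ X : ℝ, HasDerivAt (fun s => Real.exp (X^2/2) *
      ∫ t in Set.Iio X, (H (t,s) - ∫ z, H (z,s) ∂(gaussianReal 0 1)) * phi t)
      (Real.exp (X^2/2) * ∫ t in Set.Iio X, (D t - gbar) * phi t) 0 := by
    intro X
    have hA := hasDerivAt_integral_of_dominated_loc_of_lip
      (μ := volume.restrict (Iio X)) (F := fun s t => H (t, s) * phi t)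
      (F' := fun t => D t * phi t) (x₀ := (0:ℝ)) (bound := phi) (s := Metric.ball 0 1) (Metric.ball_mem_nhds 0 one_pos)
      (Filter.Eventually.of_forall fun s => ((hHsec s).mul phi_cont).aestronglyMeasurable)
      ((hHφint 0).integrableOn)
      ((hDcont.mul phi_cont).aestronglyMeasurable)
      (Filter.Eventually.of_forall fun t => by
        apply LipschitzWith.lipschitzOnWith
        apply LipschitzWith.of_dist_le_mul
        intro s s'
        rw [Real.dist_eq, Real.dist_eq]
        have : H (t, s) * phi t - H (t, s') * phi t = (H (t,s) - H (t,s')) * phi t := by ring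
        rw [this, abs_mul, abs_of_pos (phi_pos t)]
        rw [Real.coe_nnabs, abs_of_pos (phi_pos t)]
        rw [mul_comm (phi t) _]
        exact mul_le_mul_of_nonneg_right (hLips t s s') (phi_pos t).le)
      (phi_integrable.integrableOn)
      (Filter.Eventually.of_forall fun t => (key t 0).mul_const (phi t))
    obtain ⟨-, hA⟩ := hA
    set C : ℝ := ∫ t in Iio X, phi t with hC_def
    have hcomb := hA.sub (hmderiv.mul_const C)
    have hfun : (fun s => ∫ t in Iio X, (H (t,s) - ∫ z, H (z,s) ∂(gaussianReal 0 1)) * phi t)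
        = fun s => (∫ t in Iio X, H (t,s) * phi t)
            - (∫ z, H (z,s) ∂(gaussianReal 0 1)) * C := by
      funext s
      have h1 : (fun t => (H (t,s) - ∫ z, H (z,s) ∂(gaussianReal 0 1)) * phi t)
          = fun t => H (t,s) * phi t - (∫ z, H (z,s) ∂(gaussianReal 0 1)) * phi t := by
        funext t; ring
      rw [h1, integral_sub ((hHφint s).integrableOn)
        ((phi_integrable.const_mul _).integrableOn), integral_const_mul]
    have hval : (∫ t in Iio X, D t * phi t) - gbar * C
        = ∫ t in Iio X, (D t - gbar) * phi t := by
      have h1 : (fun t => (D t - gbar) * phi t)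
          = fun t => D t * phi t - gbar * phi t := by funext t; ring
      rw [h1, integral_sub (hDφint.integrableOn)
        ((phi_integrable.const_mul _).integrableOn), integral_const_mul]
    have hfin : HasDerivAt
        (fun s => ∫ t in Iio X, (H (t,s) - ∫ z, H (z,s) ∂(gaussianReal 0 1)) * phi t)
        (∫ t in Iio X, (D t - gbar) * phi t) 0 := by
      rw [hfun, ← hval]
      exact hcomb
    exact hfin.const_mul _
  -- rewrite the statement's integrand
  have hgint : (∫ z, deriv (fun s => H (z,s)) 0 ∂(gaussianReal 0 1)) = gbar := by
    rw [hgbar_def]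
    congr 1
    funext z
    exact hg z
  refine ⟨?_, ?_, ?_⟩
  · simp only [phi_def, hg, hgint]
    exact key1 x
  · simp only [phi_def, hg, hgint]
    rw [abs_mul, abs_of_pos (Real.exp_pos _)]
    calc Real.exp (x^2/2) * |∫ t in Iio x, (D t - gbar) * phi t| ≤ 2 * Real.sqrt (π/2) :=
          hmin x
      _ = Real.sqrt (2*π) := sqrt_two_pi_eq.symm
  · -- mixed derivative
    have hG : HasDerivAt (fun X : ℝ => ∫ t in Iio X, (D t - gbar) * phi t)
        ((D x - gbar) * phi x) x := by
      have heq : (fun X : ℝ => ∫ t in Iio X, (D t - gbar) * phi t)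
          = fun X => (∫ t in Iic (0:ℝ), (D t - gbar) * phi t)
              + ∫ t in (0:ℝ)..X, (D t - gbar) * phi t := by
        funext X
        rw [← integral_Iic_eq_integral_Iio]
        have h2 := intervalIntegral.integral_Iic_sub_Iic (hρint.integrableOn) (hρint.integrableOn)
          (a := (0:ℝ)) (b := X)
        linarith
      rw [heq]
      exact (intervalIntegral.integral_hasDerivAt_right
        (hρint.intervalIntegrable)
        (hρcont.aestronglyMeasurable.stronglyMeasurableAtFilter)
        (hρcont.continuousAt)).const_add _
    have hE : HasDerivAt (fun X : ℝ => Real.exp (X^2/2)) (Real.exp (x^2/2) * x) x := by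
      have h1 : HasDerivAt (fun u : ℝ => u^2/2) x x := by
        have h0 := (hasDerivAt_pow 2 x).div_const 2
        norm_num at h0
        exact h0
      exact h1.exp
    have hFf := hE.mul hG
    refine ⟨Real.exp (x^2/2) * x * (∫ t in Iio x, (D t - gbar) * phi t)
      + Real.exp (x^2/2) * ((D x - gbar) * phi x), ?_, ?_⟩
    · simp only [phi_def, hg, hgint]
      exact hFf
    · -- |q| ≤ 4
      have hq1 : |Real.exp (x^2/2) * x * (∫ t in Iio x, (D t - gbar) * phi t)| ≤ 2 := by
        rw [abs_mul, abs_mul, abs_of_pos (Real.exp_pos _)]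
        calc Real.exp (x^2/2) * |x| * |∫ t in Iio x, (D t - gbar) * phi t|
            = |x| * (Real.exp (x^2/2) * |∫ t in Iio x, (D t - gbar) * phi t|) := by ring
          _ ≤ 2 := hxmin x
      have hq2 : |Real.exp (x^2/2) * ((D x - gbar) * phi x)| ≤ 2 := by
        rw [abs_mul, abs_mul, abs_of_pos (Real.exp_pos _), abs_of_pos (phi_pos x)]
        have hd2 : |D x - gbar| ≤ 2 := by
          calc |D x - gbar| ≤ |D x| + |gbar| := abs_sub _ _
            _ ≤ 2 := by linarith [hD1 x, hgbar1]
        calc Real.exp (x^2/2) * (|D x - gbar| * phi x)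
            = |D x - gbar| * (Real.exp (x^2/2) * phi x) := by ring
          _ = |D x - gbar| * (Real.exp (x^2/2) * Real.exp (-x^2/2)) := rfl
          _ = |D x - gbar| := by rw [hexp1 x, mul_one]
          _ ≤ 2 := hd2
      calc |Real.exp (x^2/2) * x * (∫ t in Iio x, (D t - gbar) * phi t)
            + Real.exp (x^2/2) * ((D x - gbar) * phi x)|
          ≤ |Real.exp (x^2/2) * x * (∫ t in Iio x, (D t - gbar) * phi t)|
            + |Real.exp (x^2/2) * ((D x - gbar) * phi x)| := abs_add_le _ _
        _ ≤ 4 := by linarith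

/-- for the Stein solution `f_h` associated with a `C¹`, 1-Lipschitz
function `h : ℝ × ℝ^d → ℝ`, each partial derivative `∂_{y_j} f_h` exists and is given
by the corresponding Stein-type integral formula, with `|∂_{y_j} f_h| ≤ √(2π)`; moreover
the mixed partial `∂_x ∂_{y_j} f_h` exists and `|∂_x ∂_{y_j} f_h| ≤ 4`. -/
theorem stmt3 (d : ℕ) (hd : 1 ≤ d) (h : ℝ → EuclideanSpace ℝ (Fin d) → ℝ)
    (hC1 : ContDiff ℝ 1 fun p : ℝ × EuclideanSpace ℝ (Fin d) => h p.1 p.2)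
    (hLip : ∀ x x' y y', |h x y - h x' y'| ≤ Real.sqrt ((x - x') ^ 2 + ‖y - y'‖ ^ 2))
    (fh : ℝ → EuclideanSpace ℝ (Fin d) → ℝ)
    (hfh : ∀ x y, fh x y = Real.exp (x ^ 2 / 2) *
      ∫ t in Set.Iio x, (h t y - ∫ z, h z y ∂(gaussianReal 0 1)) * Real.exp (-t ^ 2 / 2)) :
    ∀ (j : Fin d) (x : ℝ) (y : EuclideanSpace ℝ (Fin d)),
      HasDerivAt (fun s : ℝ => fh x (y + s • EuclideanSpace.single j (1 : ℝ)))
        (Real.exp (x ^ 2 / 2) *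
          ∫ t in Set.Iio x,
            ((deriv (fun s : ℝ => h t (y + s • EuclideanSpace.single j (1 : ℝ))) 0)
              - ∫ z, deriv (fun s : ℝ => h z (y + s • EuclideanSpace.single j (1 : ℝ))) 0
                  ∂(gaussianReal 0 1)) * Real.exp (-t ^ 2 / 2)) 0 ∧
      |deriv (fun s : ℝ => fh x (y + s • EuclideanSpace.single j (1 : ℝ))) 0|
          ≤ Real.sqrt (2 * Real.pi) ∧
      ∃ q : ℝ,
        HasDerivAt (fun x' : ℝ =>
            deriv (fun s : ℝ => fh x' (y + s • EuclideanSpace.single j (1 : ℝ))) 0) q x ∧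
        |q| ≤ 4 := by
  intro j x y
  set u : EuclideanSpace ℝ (Fin d) := EuclideanSpace.single j (1 : ℝ) with hu_def
  have hu_norm : ‖u‖ = 1 := by
    rw [hu_def, EuclideanSpace.norm_single, norm_one]
  set K : ℝ × ℝ → ℝ := fun p => h p.1 (y + p.2 • u) with hK_def
  have hKC1 : ContDiff ℝ 1 K := by
    have hinner : ContDiff ℝ 1 fun p : ℝ × ℝ =>
        ((p.1, y + p.2 • u) : ℝ × EuclideanSpace ℝ (Fin d)) :=
      contDiff_fst.prodMk (contDiff_const.add (contDiff_snd.smul contDiff_const))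
    exact hC1.comp hinner
  have hKlipt : ∀ t t' s : ℝ, |K (t,s) - K (t',s)| ≤ |t - t'| := by
    intro t t' s
    have := hLip t t' (y + s • u) (y + s • u)
    simpa [Real.sqrt_sq_eq_abs] using this
  have hKlips : ∀ t s s' : ℝ, |K (t,s) - K (t,s')| ≤ |s - s'| := by
    intro t s s'
    have h1 := hLip t t (y + s • u) (y + s' • u)
    have h2 : (y + s • u) - (y + s' • u) = (s - s') • u := by
      rw [sub_smul]; abel
    rw [h2] at h1
    have h3 : ‖(s - s') • u‖ = |s - s'| := by
      rw [norm_smul, hu_norm, Real.norm_eq_abs, mul_one]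
    rw [h3] at h1
    simpa [Real.sqrt_sq_eq_abs] using h1
  have hS := steinAux K hKC1 hKlipt hKlips
  -- translate `fh` into the explicit form, for each cut point x'
  have hfeq : ∀ x' : ℝ, (fun s : ℝ => fh x' (y + s • u))
      = fun s => Real.exp (x'^2/2) *
          ∫ t in Set.Iio x', (K (t,s) - ∫ z, K (z,s) ∂(gaussianReal 0 1)) * Real.exp (-t^2/2) :=
    fun x' => funext fun s => hfh x' (y + s • u)
  have GP1 : ∀ x' : ℝ, HasDerivAt (fun s : ℝ => fh x' (y + s • u))
      (Real.exp (x'^2/2) * ∫ t in Set.Iio x',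
        ((deriv (fun s => K (t,s)) 0) - ∫ z, deriv (fun s => K (z,s)) 0 ∂(gaussianReal 0 1))
          * Real.exp (-t^2/2)) 0 := by
    intro x'
    rw [hfeq x']
    exact (hS x').1
  refine ⟨GP1 x, ?_, ?_⟩
  · rw [(GP1 x).deriv]
    exact (hS x).2.1
  · have hfun3 : (fun x' : ℝ => deriv (fun s : ℝ => fh x' (y + s • u)) 0)
        = fun x' => Real.exp (x'^2/2) * ∫ t in Set.Iio x',
            ((deriv (fun s => K (t,s)) 0) - ∫ z, deriv (fun s => K (z,s)) 0 ∂(gaussianReal 0 1))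
              * Real.exp (-t^2/2) :=
      funext fun x' => (GP1 x').deriv
    rw [hfun3]
    exact (hS x).2.2
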